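/- Fix a channel coefficient h ∈ ℂ with h ≠ 0. Then the MVU filter f_MVU = x/‖x‖² is a global minimizer of the zeroth-order excess MSE for the ZF equalizer with deterministic channel: for every nonzero filter f ∈ ℂ^B, Me_dc(f_MVU) ≤ Me_dc(f). (Proposition 3: the MVU is an optimal channel estimator for minimizing [MSE_xe^dc(ZF)]_0.) -/

import Mathlib

/-! By Cauchy–Schwarz `|φ(f)|² ≤ ‖f‖²‖x‖²`. The MVU filter has `φ = 1` and `‖f_MVU‖² = 1/‖x‖²`,
so the `|φ - 1|²` term vanishes and its ratio is `σw² / (|h|²‖x‖² + σw²)`. Cross-multiplying,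
the comparison with any `f` reduces to `σw²|h|²|φ(f)|² ≤ σw²|h|²‖f‖²‖x‖²` plus nonnegative terms. -/

open MeasureTheory

/-- `φ(f) = fᴴ x = Σᵢ conj(fᵢ)·xᵢ`. -/
noncomputable def phi {B : ℕ} (x f : Fin B → ℂ) : ℂ :=
  ∑ i, (starRingEnd ℂ) (f i) * x i

/-- Squared Euclidean norm `‖f‖² = Σᵢ |fᵢ|²`. -/
noncomputable def nsq {B : ℕ} (f : Fin B → ℂ) : ℝ :=
  ∑ i, Complex.normSq (f i)

/-- Zeroth-order excess MSE of the ZF equalizer, deterministic channel `h`. -/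
noncomputable def MeDc {B : ℕ} (σx2 σw2 : ℝ) (h : ℂ) (x f : Fin B → ℂ) : ℝ :=
  ((Complex.normSq h * Complex.normSq (phi x f - 1) + σw2 * nsq f) /
    (Complex.normSq h * Complex.normSq (phi x f) + σw2 * nsq f)) *
    (σx2 + σw2 / Complex.normSq h)

/-- The MVU channel-estimating filter `f_MVU = x / ‖x‖²`. -/
noncomputable def fMVU {B : ℕ} (x : Fin B → ℂ) : Fin B → ℂ :=
  fun i => x i / (nsq x : ℂ)

open Complex

section EuclideanSpace

variable {B : ℕ}

lemma nsq_eq_norm_sq (f : Fin B → ℂ) : nsq f = ‖WithLp.toLp 2 f‖ ^ 2 := by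
  simp [nsq, EuclideanSpace.norm_sq_eq, Complex.normSq_eq_norm_sq]

lemma phi_eq_inner (x f : Fin B → ℂ) :
    phi x f = inner ℂ (WithLp.toLp 2 f) (WithLp.toLp 2 x) := by
  simp [phi, PiLp.inner_apply, mul_comm]

lemma nsq_pos {f : Fin B → ℂ} (hf : f ≠ 0) : 0 < nsq f := by
  rw [nsq_eq_norm_sq]
  exact pow_pos (norm_pos_iff.mpr fun h0 => hf (congrArg WithLp.ofLp h0)) 2

lemma normSq_phi_le (x f : Fin B → ℂ) : normSq (phi x f) ≤ nsq f * nsq x := by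
  rw [normSq_eq_norm_sq, phi_eq_inner, nsq_eq_norm_sq, nsq_eq_norm_sq, ← mul_pow]
  exact pow_le_pow_left₀ (norm_nonneg _) (norm_inner_le_norm _ _) 2

lemma toLp_fMVU (x : Fin B → ℂ) :
    WithLp.toLp 2 (fMVU x) = (nsq x : ℂ)⁻¹ • WithLp.toLp 2 x := by
  ext i
  simp [fMVU, div_eq_inv_mul]

lemma phi_fMVU {x : Fin B → ℂ} (hx : x ≠ 0) : phi x (fMVU x) = 1 := by
  rw [phi_eq_inner, toLp_fMVU, inner_smul_left, inner_self_eq_norm_sq_to_K,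
    ← RCLike.ofReal_pow, ← nsq_eq_norm_sq]
  simp [(nsq_pos hx).ne']

lemma nsq_fMVU (x : Fin B → ℂ) : nsq (fMVU x) = (nsq x)⁻¹ := by
  rw [nsq_eq_norm_sq, toLp_fMVU, norm_smul, mul_pow, ← nsq_eq_norm_sq, norm_inv, norm_real,
    Real.norm_of_nonneg (by rw [nsq_eq_norm_sq]; positivity)]
  field_simp

end EuclideanSpace

lemma div_mul_add_le_div_mul_add {A σ s n c q : ℝ} (hA : 0 ≤ A) (hσ : 0 < σ) (hs : 0 ≤ s) (hn : 0 < n)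
    (hc : 0 ≤ c) (hcs : c ≤ n * s) (hq : 0 ≤ q) :
    σ / (A * s + σ) ≤ (A * q + σ * n) / (A * c + σ * n) := by
  rw [div_le_div_iff₀ (by positivity) (by positivity)]
  have hcross : σ * A * c ≤ σ * A * (n * s) := mul_le_mul_of_nonneg_left hcs (by positivity)
  nlinarith [mul_nonneg (mul_nonneg hA hs) (mul_nonneg hA hq), mul_nonneg hσ.le (mul_nonneg hA hq)]

lemma MeDc_fMVU {B : ℕ} (σx2 σw2 : ℝ) (h : ℂ) {x : Fin B → ℂ} (hx : x ≠ 0) :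
    MeDc σx2 σw2 h x (fMVU x) =
      σw2 / (normSq h * nsq x + σw2) * (σx2 + σw2 / normSq h) := by
  have hs := (nsq_pos hx).ne'
  rw [MeDc, phi_fMVU hx, nsq_fMVU, sub_self, map_zero, map_one]
  congr 1
  simp only [mul_zero, zero_add]
  field_simp

theorem mvu_optimal_zeroth_order_excess_mse_dc_general
    (B : ℕ) (x : Fin B → ℂ) (hx : x ≠ 0)
    (σx2 σw2 : ℝ) (hσx : 0 < σx2) (hσw : 0 < σw2)
    (h : ℂ) :
    ∀ f : Fin B → ℂ, f ≠ 0 →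
      MeDc σx2 σw2 h x (fMVU x) ≤ MeDc σx2 σw2 h x f := by
  intro f hf
  rw [MeDc_fMVU σx2 σw2 h hx, MeDc]
  refine mul_le_mul_of_nonneg_right ?_ (add_nonneg hσx.le (div_nonneg hσw.le (normSq_nonneg h)))
  exact div_mul_add_le_div_mul_add (normSq_nonneg h) hσw (nsq_pos hx).le (nsq_pos hf)
    (normSq_nonneg _) (normSq_phi_le x f) (normSq_nonneg _)

/-- Proposition 3: the MVU filter is a global minimizer of the zeroth-order
excess MSE `[MSE_xe^dc(ZF)]₀` for a deterministic channel. -/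
theorem mvu_optimal_zeroth_order_excess_mse_dc
    (B : ℕ) (hB : 1 ≤ B) (x : Fin B → ℂ) (hx : x ≠ 0)
    (σx2 σw2 : ℝ) (hσx : 0 < σx2) (hσw : 0 < σw2)
    (h : ℂ) (hh : h ≠ 0) :
    ∀ f : Fin B → ℂ, f ≠ 0 →
      MeDc σx2 σw2 h x (fMVU x) ≤ MeDc σx2 σw2 h x f :=
  mvu_optimal_zeroth_order_excess_mse_dc_general B x hx σx2 σw2 hσx hσw h
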